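/- arXiv:2204.06721 — 10 statements merged into one kernel-verified Lean document; each statement's English description precedes it below -/
import Mathlib

section
/- Aristotle's theses are valid for super-strict implication over the class of all frames: for every frame, every world w, and all propositions A, the formula ¬(A ▷ ¬A) is true at w and the formula ¬(¬A ▷ A) is true at w. -/
/-- Super-strict implication over a (normal) frame with accessibility `R`:
`A ▷ B` is true at `w` iff every `R`-successor of `w` satisfying `A` satisfies `B`,
and some `R`-successor of `w` satisfies `A`. -/
def ssi {W : Type} (R : W → W → Prop) (A B : W → Prop) (w : W) : Prop :=
  (∀ v, R w v → A v → B v) ∧ ∃ v, R w v ∧ A v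

/-- Aristotle's theses are valid for super-strict implication over all frames. -/
theorem aristotle_theses_valid :
    ∀ (W : Type) [Nonempty W] (R : W → W → Prop) (w : W) (A : W → Prop),
      ¬ ssi R A (fun v => ¬ A v) w ∧ ¬ ssi R (fun v => ¬ A v) A w := by
  intro W _ R w A
  constructor
  · rintro ⟨h, v, hR, hA⟩
    exact h v hR hA hA
  · rintro ⟨h, v, hR, hA⟩
    exact hA (h v hR hA)
end

section
/- Weak Boethius' theses are valid for super-strict implication over the class of all frames: for every frame, every world w, and all propositions A, B, if A ▷ B is true at w then A ▷ ¬B is not true at w (and hence, equivalently, if A ▷ ¬B is true at w then A ▷ B is not true at w). -/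
/-- Weak Boethius' theses are valid for super-strict implication over all frames. -/
theorem weak_boethius_valid :
    ∀ (W : Type) [Nonempty W] (R : W → W → Prop) (w : W) (A B : W → Prop),
      (ssi R A B w → ¬ ssi R A (fun v => ¬ B v) w) ∧
      (ssi R A (fun v => ¬ B v) w → ¬ ssi R A B w) := by
  intro W _ R w A B
  constructor
  · rintro ⟨h1, v, hRv, hAv⟩ ⟨h2, -⟩
    exact h2 v hRv hAv (h1 v hRv hAv)
  · rintro ⟨h2, -⟩ ⟨h1, v, hRv, hAv⟩
    exact h2 v hRv hAv (h1 v hRv hAv)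
end

section
/- The negation of the first paradox of strict implication is valid for super-strict implication: for every frame, every world w, and every proposition B, the formula ¬(⊥ ▷ B) is true at w, where ⊥ is the proposition false at every world. -/
/-- The negation of the first paradox of strict implication is valid: ¬(⊥ ▷ B). -/
theorem neg_first_paradox_valid :
    ∀ (W : Type) [Nonempty W] (R : W → W → Prop) (w : W) (B : W → Prop),
      ¬ ssi R (fun _ => False) B w := by
  rintro W _ R w B ⟨_, v, _, h⟩; exact h
end

section
/- Reflexivity is not valid for super-strict implication, even over reflexive frames: there exist a reflexive frame (R w w for all w), a world w, and a proposition A such that A ▷ A is not true at w. -/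
/-- Reflexivity `A ▷ A` is not valid for super-strict implication, even over reflexive frames. -/
theorem reflexivity_not_valid :
    ∃ (W : Type) (_ : Nonempty W) (R : W → W → Prop) (_ : ∀ w, R w w) (w : W) (A : W → Prop),
      ¬ ssi R A A w := by
  refine ⟨Unit, ⟨()⟩, fun _ _ => True, fun _ => trivial, (), fun _ => False, ?_⟩
  rintro ⟨-, v, -, h⟩
  exact h
end

section
/- Contraposition is not valid for super-strict implication: there exist a frame, a world w, and propositions A, B such that A ▷ B is true at w but ¬B ▷ ¬A is not true at w. -/
/-- Contraposition is not valid for super-strict implication. -/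
theorem contraposition_not_valid :
    ∃ (W : Type) (_ : Nonempty W) (R : W → W → Prop) (w : W) (A B : W → Prop),
      ssi R A B w ∧ ¬ ssi R (fun v => ¬ B v) (fun v => ¬ A v) w := by
  refine ⟨Unit, ⟨()⟩, fun _ _ => True, (), fun _ => True, fun _ => True,
    ⟨fun _ _ h => h, ⟨(), trivial, trivial⟩⟩, ?_⟩
  rintro ⟨-, v, -, hv⟩
  exact hv trivial
end

section
/- Modus ponens for super-strict implication can fail on non-reflexive frames: there exist a frame and propositions A, B such that A ▷ B is true at every world and A is true at every world, but B is not true at every world. -/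
/-- Modus ponens for super-strict implication can fail on non-reflexive frames. -/
theorem modus_ponens_can_fail :
    ∃ (W : Type) (_ : Nonempty W) (R : W → W → Prop) (A B : W → Prop),
      (∀ w, ssi R A B w) ∧ (∀ w, A w) ∧ ¬ (∀ w, B w) := by
  refine ⟨Bool, ⟨true⟩, fun _ v => v = true, fun _ => True, fun w => w = true, ?_, fun _ => trivial, ?_⟩
  · intro w
    exact ⟨fun v hv _ => hv, ⟨true, rfl, trivial⟩⟩
  · intro h
    simpa using h false
end

section
/- Aristotle's theses belong to the non-normal logic S2⁰ of super-strict implication: for every non-normal frame, every normal point w ∈ N, and every proposition A, the formula ¬(A ▷ ¬A) is true at w and the formula ¬(¬A ▷ A) is true at w. -/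
/-- Super-strict implication over a non-normal frame with accessibility `R` and
normal points `N`: `A ▷ B` is true at `w` iff `w` is a normal point, every
`R`-successor of `w` satisfying `A` satisfies `B`, and some `R`-successor of `w`
satisfies `A`. -/
def nssi {W : Type} (R : W → W → Prop) (N : Set W) (A B : W → Prop) (w : W) : Prop :=
  w ∈ N ∧ (∀ v, R w v → A v → B v) ∧ ∃ v, R w v ∧ A v

/-- Necessity over a non-normal frame: `□A` is true at `w` iff `w` is a normal point
and `A` is true at every `R`-successor of `w`. -/
def nbox {W : Type} (R : W → W → Prop) (N : Set W) (A : W → Prop) (w : W) : Prop :=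
  w ∈ N ∧ ∀ v, R w v → A v

/-- Possibility over a non-normal frame: `◇A` is true at `w` iff `w` is not a normal
point or some `R`-successor of `w` satisfies `A`. -/
def ndia {W : Type} (R : W → W → Prop) (N : Set W) (A : W → Prop) (w : W) : Prop :=
  w ∉ N ∨ ∃ v, R w v ∧ A v

/-- Aristotle's theses belong to the non-normal logic S2⁰ of super-strict implication. -/
theorem aristotle_theses_nonnormal :
    ∀ (W : Type) [Nonempty W] (R : W → W → Prop) (N : Set W) (w : W), w ∈ N →
      ∀ (A : W → Prop),
        ¬ nssi R N A (fun v => ¬ A v) w ∧ ¬ nssi R N (fun v => ¬ A v) A w := by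
  intro W _ R N w _ A
  constructor
  · rintro ⟨_, h, v, hv, hA⟩
    exact h v hv hA hA
  · rintro ⟨_, h, v, hv, hA⟩
    exact hA (h v hv hA)
end

section
/- Weak Boethius' theses belong to the non-normal logic S2⁰ of super-strict implication: for every non-normal frame, every normal point w ∈ N, and all propositions A, B, if A ▷ B is true at w then A ▷ ¬B is not true at w (and hence, equivalently, if A ▷ ¬B is true at w then A ▷ B is not true at w). -/
/-- Weak Boethius' theses belong to the non-normal logic S2⁰ of super-strict implication. -/
theorem weak_boethius_nonnormal :
    ∀ (W : Type) [Nonempty W] (R : W → W → Prop) (N : Set W) (w : W), w ∈ N →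
      ∀ (A B : W → Prop),
        (nssi R N A B w → ¬ nssi R N A (fun v => ¬ B v) w) ∧
        (nssi R N A (fun v => ¬ B v) w → ¬ nssi R N A B w) := by
  intro W _ R N w hw A B
  constructor <;> rintro ⟨-, h1, v, hv, hA⟩ ⟨-, h2, -⟩ <;>
    first | exact h2 v hv hA (h1 v hv hA) | exact h1 v hv hA (h2 v hv hA)
end

section
/- Transitivity of super-strict implication is valid in every non-normal frame: for every non-normal frame, every normal point w ∈ N, and all propositions A, B, C, if A ▷ B is true at w and B ▷ C is true at w, then A ▷ C is true at w. -/
/-- Transitivity of super-strict implication is valid in every non-normal frame. -/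
theorem ssi_transitive_nonnormal :
    ∀ (W : Type) [Nonempty W] (R : W → W → Prop) (N : Set W) (w : W), w ∈ N →
      ∀ (A B C : W → Prop),
        nssi R N A B w → nssi R N B C w → nssi R N A C w := by
  rintro W _ R N w hw A B C ⟨_, hab, v, hv, hA⟩ ⟨_, hbc, -⟩
  exact ⟨hw, fun u hu ha => hbc u hu (hab u hu ha), v, hv, hA⟩
end

section
/- Lewis' simplification axiom is not valid for super-strict implication over reflexive non-normal frames: there exist a reflexive non-normal frame (R w w for all w), a normal point w ∈ N, and propositions A, B such that (A ∧ B) ▷ A is not true at w; likewise there exist a reflexive non-normal frame, a normal point w' ∈ N, and propositions A', B' such that (A' ∧ B') ▷ (B' ∧ A') is not true at w'. -/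
/-- Lewis' simplification and commutation axioms are not valid for super-strict
implication over reflexive non-normal frames. -/
theorem simplification_not_valid :
    (∃ (W : Type) (_ : Nonempty W) (R : W → W → Prop) (_ : ∀ w, R w w) (N : Set W)
        (w : W) (_ : w ∈ N) (A B : W → Prop),
      ¬ nssi R N (fun v => A v ∧ B v) A w) ∧
    (∃ (W : Type) (_ : Nonempty W) (R : W → W → Prop) (_ : ∀ w, R w w) (N : Set W)
        (w' : W) (_ : w' ∈ N) (A' B' : W → Prop),
      ¬ nssi R N (fun v => A' v ∧ B' v) (fun v => B' v ∧ A' v) w') := by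
  constructor <;>
  · refine ⟨Unit, ⟨()⟩, fun _ _ => True, fun _ => trivial, Set.univ, (), trivial,
      fun _ => False, fun _ => False, ?_⟩
    rintro ⟨-, -, v, -, h, -⟩
    exact h
end
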